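/- For any r with 1/2 ≤ r < 1/√3, there exists a set P of n points in the plane of diameter at most 1 such that every closed disc of radius r contains at most ⌈2n/3⌉ points of P. -/
import Mathlib
set_option maxHeartbeats 1000000


open Metric
open scoped Classical

noncomputable def UBpt (x y : ℝ) : EuclideanSpace ℝ (Fin 2) :=
  (EuclideanSpace.equiv (Fin 2) ℝ).symm ![x, y]

lemma UBpt_apply0 (x y : ℝ) : UBpt x y 0 = x := rfl
lemma UBpt_apply1 (x y : ℝ) : UBpt x y 1 = y := rfl

lemma UB_dist_sq (x y : EuclideanSpace ℝ (Fin 2)) :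
    dist x y ^ 2 = (x 0 - y 0) ^ 2 + (x 1 - y 1) ^ 2 := by
  rw [EuclideanSpace.dist_eq, Real.sq_sqrt (by positivity)]
  simp [Fin.sum_univ_two, Real.dist_eq, sq_abs]

lemma UB_fin_filter_card (n a b : ℕ) :
    ((Finset.univ : Finset (Fin n)).filter (fun i => a ≤ i.val ∧ i.val < b)).card
      = min b n - a := by
  rw [Finset.card_filter, Fin.sum_univ_eq_sum_range (fun i => if a ≤ i ∧ i < b then 1 else 0),
    ← Finset.card_filter]
  have : ((Finset.range n).filter (fun i => a ≤ i ∧ i < b)) = Finset.Ico a (min b n) := by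
    ext x; simp [Finset.mem_Ico]; omega
  rw [this, Nat.card_Ico]

lemma UB_fin_filter_not_card (n a b : ℕ) :
    ((Finset.univ : Finset (Fin n)).filter (fun i => ¬ (a ≤ i.val ∧ i.val < b))).card
      = n - (min b n - a) := by
  have h := Finset.card_filter_add_card_filter_not
    (s := (Finset.univ : Finset (Fin n))) (p := fun i => a ≤ i.val ∧ i.val < b)
  rw [UB_fin_filter_card] at h
  simp only [Finset.card_univ, Fintype.card_fin] at h
  omega

/-- For any `1/2 ≤ r < 1/√3` there is a configuration of `n` points of diameter at most 1
such that every closed disc of radius `r` contains at most `⌈2n/3⌉` of the points. -/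
theorem upper_bound_two_thirds (r : ℝ) (hr0 : 1 / 2 ≤ r) (hr1 : r < 1 / Real.sqrt 3) (n : ℕ) :
    ∃ P : Fin n → EuclideanSpace ℝ (Fin 2),
      (∀ i j, dist (P i) (P j) ≤ 1) ∧
      ∀ c : EuclideanSpace ℝ (Fin 2),
        (Finset.univ.filter (fun i => P i ∈ closedBall c r)).card ≤ ⌈(2 * n : ℝ) / 3⌉₊ := by
  set s := Real.sqrt 3 with hs_def
  have hs0 : (0:ℝ) < s := Real.sqrt_pos.mpr (by norm_num)
  have hs2 : s ^ 2 = 3 := Real.sq_sqrt (by norm_num)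
  set A := UBpt 0 0 with hA
  set B := UBpt 1 0 with hB
  set C := UBpt (1/2) (s/2) with hC
  -- squared radius bound
  have hr2 : r ^ 2 < 1 / 3 := by
    have h1 : r * s < 1 := by
      rw [lt_div_iff₀ hs0] at hr1; exact hr1
    nlinarith
  -- pairwise distances
  have hAB : dist A B ≤ 1 := by
    have h := UB_dist_sq A B
    simp only [hA, hB, UBpt_apply0, UBpt_apply1] at h
    nlinarith [dist_nonneg (x := A) (y := B)]
  have hAC : dist A C ≤ 1 := by
    have h := UB_dist_sq A C
    simp only [hA, hC, UBpt_apply0, UBpt_apply1] at h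
    nlinarith [dist_nonneg (x := A) (y := C)]
  have hBC : dist B C ≤ 1 := by
    have h := UB_dist_sq B C
    simp only [hB, hC, UBpt_apply0, UBpt_apply1] at h
    nlinarith [dist_nonneg (x := B) (y := C)]
  -- key geometric fact: no disc of radius r contains all three vertices
  have key : ∀ c : EuclideanSpace ℝ (Fin 2),
      ¬ (dist A c ≤ r ∧ dist B c ≤ r ∧ dist C c ≤ r) := by
    rintro c ⟨h1, h2, h3⟩
    have hr0' : (0:ℝ) ≤ r := by linarith
    have e1 : dist A c ^ 2 ≤ r ^ 2 := by nlinarith [dist_nonneg (x := A) (y := c)]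
    have e2 : dist B c ^ 2 ≤ r ^ 2 := by nlinarith [dist_nonneg (x := B) (y := c)]
    have e3 : dist C c ^ 2 ≤ r ^ 2 := by nlinarith [dist_nonneg (x := C) (y := c)]
    rw [UB_dist_sq] at e1 e2 e3
    simp only [hA, hB, hC, UBpt_apply0, UBpt_apply1] at e1 e2 e3
    nlinarith [sq_nonneg (c 0 - 1/2), sq_nonneg (c 1 - s/6), hs2, hs0]
  -- the configuration
  refine ⟨fun i => if i.val < n/3 then A else if i.val < 2*(n/3) then B else C, ?_, ?_⟩
  · intro i j
    have hi : (if (i:ℕ) < n/3 then A else if (i:ℕ) < 2*(n/3) then B else C) = A ∨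
        (if (i:ℕ) < n/3 then A else if (i:ℕ) < 2*(n/3) then B else C) = B ∨
        (if (i:ℕ) < n/3 then A else if (i:ℕ) < 2*(n/3) then B else C) = C := by
      split_ifs <;> simp
    have hj : (if (j:ℕ) < n/3 then A else if (j:ℕ) < 2*(n/3) then B else C) = A ∨
        (if (j:ℕ) < n/3 then A else if (j:ℕ) < 2*(n/3) then B else C) = B ∨
        (if (j:ℕ) < n/3 then A else if (j:ℕ) < 2*(n/3) then B else C) = C := by
      split_ifs <;> simp
    rcases hi with h | h | h <;> rcases hj with h' | h' | h' <;> (dsimp only; rw [h, h']) <;>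
      first
        | exact hAB | exact hAC | exact hBC
        | (rw [dist_comm]; first | exact hAB | exact hAC | exact hBC)
        | simp
  · intro c
    have hceil : n - n/3 ≤ ⌈(2 * n : ℝ) / 3⌉₊ := by
      rcases Nat.eq_zero_or_pos n with h | h
      · simp [h]
      · have hlt : n - n/3 - 1 < ⌈(2 * n : ℝ) / 3⌉₊ := by
          rw [Nat.lt_ceil, lt_div_iff₀ (by norm_num : (0:ℝ) < 3)]
          exact_mod_cast (show (n - n/3 - 1) * 3 < 2 * n by omega)
        omega
    refine le_trans ?_ hceil
    -- some vertex is outside the ball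
    have hout : ¬ dist A c ≤ r ∨ ¬ dist B c ≤ r ∨ ¬ dist C c ≤ r := by
      by_contra h; push_neg at h; exact key c ⟨h.1, h.2.1, h.2.2⟩
    rcases hout with h | h | h
    · calc (Finset.univ.filter _).card
          ≤ ((Finset.univ : Finset (Fin n)).filter
            (fun i => ¬ (0 ≤ i.val ∧ i.val < n/3))).card := by
            apply Finset.card_le_card
            intro i hi
            simp only [Finset.mem_filter, Finset.mem_univ, true_and] at hi ⊢
            intro ⟨_, hlt⟩
            rw [if_pos hlt] at hi
            exact h (mem_closedBall.mp hi)
        _ ≤ n - n/3 := by rw [UB_fin_filter_not_card]; omega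
    · calc (Finset.univ.filter _).card
          ≤ ((Finset.univ : Finset (Fin n)).filter
            (fun i => ¬ (n/3 ≤ i.val ∧ i.val < 2*(n/3)))).card := by
            apply Finset.card_le_card
            intro i hi
            simp only [Finset.mem_filter, Finset.mem_univ, true_and] at hi ⊢
            intro ⟨hge, hlt⟩
            rw [if_neg (by omega), if_pos hlt] at hi
            exact h (mem_closedBall.mp hi)
        _ ≤ n - n/3 := by rw [UB_fin_filter_not_card]; omega
    · calc (Finset.univ.filter _).card
          ≤ ((Finset.univ : Finset (Fin n)).filter
            (fun i => ¬ (2*(n/3) ≤ i.val ∧ i.val < n))).card := by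
            apply Finset.card_le_card
            intro i hi
            simp only [Finset.mem_filter, Finset.mem_univ, true_and] at hi ⊢
            intro ⟨hge, _⟩
            rw [if_neg (by omega), if_neg (by omega)] at hi
            exact h (mem_closedBall.mp hi)
        _ ≤ n - n/3 := by rw [UB_fin_filter_not_card]; omega
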